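/- arXiv:math/0502425 — 7 statements merged into one kernel-verified Lean document; each statement's English description precedes it below -/
import Mathlib

section
/- If a_1, ..., a_m (m ≥ 2) are pairwise distinct elements of a field, and for each i one forms the product D_i = ∏_{j ≠ i} (a_i − a_j) of the differences of a_i with all the other numbers, then the sum of the reciprocals vanishes: ∑_{i=1}^m 1/D_i = 0. -/
open Polynomial Finset

theorem euler_sum_reciprocal_differences_eq_zero
    {F : Type*} [Field F] (m : ℕ) (hm : 2 ≤ m)
    (a : Fin m → F) (ha : Function.Injective a) :
    ∑ i : Fin m, (∏ j ∈ Finset.univ.erase i, (a i - a j))⁻¹ = 0 := by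
  have hinj : Set.InjOn a (Finset.univ : Finset (Fin m)) := ha.injOn
  have hsum : ∑ j : Fin m, Lagrange.basis Finset.univ a j = 1 :=
    Lagrange.sum_basis hinj ⟨⟨0, by omega⟩, mem_univ _⟩
  have hcard : (Finset.univ : Finset (Fin m)).card = m := by simp
  have hcoeff : ∀ i : Fin m, (Lagrange.basis Finset.univ a i).coeff (m - 1)
      = (∏ j ∈ Finset.univ.erase i, (a i - a j))⁻¹ := by
    intro i
    have hdeg := Lagrange.natDegree_basis hinj (mem_univ i)
    rw [hcard] at hdeg
    have hne : Lagrange.basis Finset.univ a i ≠ 0 := Lagrange.basis_ne_zero hinj (mem_univ i)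
    have : (Lagrange.basis Finset.univ a i).coeff (m - 1)
        = (Lagrange.basis Finset.univ a i).leadingCoeff := by
      rw [Polynomial.leadingCoeff, hdeg]
    rw [this, Lagrange.basis, Polynomial.leadingCoeff_prod, ← Finset.prod_inv_distrib]
    refine Finset.prod_congr rfl fun j hj => ?_
    have hij : a i - a j ≠ 0 := sub_ne_zero.mpr (fun h => (mem_erase.mp hj).1 (ha h).symm)
    rw [Lagrange.basisDivisor, Polynomial.leadingCoeff_mul, Polynomial.leadingCoeff_C,
      Polynomial.leadingCoeff_X_sub_C, mul_one]
  calc ∑ i : Fin m, (∏ j ∈ Finset.univ.erase i, (a i - a j))⁻¹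
      = ∑ i : Fin m, (Lagrange.basis Finset.univ a i).coeff (m - 1) := by
        exact Finset.sum_congr rfl fun i _ => (hcoeff i).symm
    _ = (∑ i : Fin m, Lagrange.basis Finset.univ a i).coeff (m - 1) := by
        rw [Polynomial.finset_sum_coeff]
    _ = (1 : F[X]).coeff (m - 1) := by rw [hsum]
    _ = 0 := by
        rw [Polynomial.coeff_one]
        simp only [ite_eq_right_iff]
        intro h; omega
end

section
/- If a_1, ..., a_m (m ≥ 2) are pairwise distinct elements of a field and n is a natural number with n < m − 1, then ∑_{i=1}^m a_i^n / D_i = 0, where D_i = ∏_{j ≠ i} (a_i − a_j). -/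
open Polynomial Finset Lagrange

theorem euler_sum_powers_over_differences_eq_zero
    {F : Type*} [Field F] (m : ℕ) (hm : 2 ≤ m)
    (a : Fin m → F) (ha : Function.Injective a)
    (n : ℕ) (hn : n < m - 1) :
    ∑ i : Fin m, a i ^ n / ∏ j ∈ Finset.univ.erase i, (a i - a j) = 0 := by
  have hvs : Set.InjOn a (Finset.univ : Finset (Fin m)) := ha.injOn
  have hcard : (Finset.univ : Finset (Fin m)).card = m := by simp
  have hdeg : (X ^ n : F[X]).degree < (Finset.univ : Finset (Fin m)).card := by
    rw [degree_X_pow, hcard]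
    exact_mod_cast lt_of_lt_of_le hn (Nat.sub_le m 1)
  have key := Lagrange.eq_interpolate (f := (X ^ n : F[X])) hvs hdeg
  have hc := congrArg (fun p => Polynomial.coeff p (m - 1)) key
  simp only [interpolate_apply, finset_sum_coeff, coeff_C_mul, eval_pow, eval_X] at hc
  have hbasis : ∀ i : Fin m, (Lagrange.basis Finset.univ a i).coeff (m - 1)
      = (∏ j ∈ Finset.univ.erase i, (a i - a j))⁻¹ := by
    intro i
    have hnd : (Lagrange.basis Finset.univ a i).natDegree = m - 1 := by
      rw [Lagrange.natDegree_basis hvs (mem_univ i), hcard]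
    rw [show (m - 1) = (Lagrange.basis Finset.univ a i).natDegree from hnd.symm,
      coeff_natDegree, Lagrange.basis, leadingCoeff_prod, ← prod_inv_distrib]
    refine prod_congr rfl fun j hj => ?_
    have hij : a i - a j ≠ 0 := by
      rw [sub_ne_zero]
      exact fun h => (mem_erase.mp hj).1 (ha h).symm
    rw [basisDivisor, leadingCoeff_mul, leadingCoeff_C, leadingCoeff_X_sub_C, mul_one]
  have hxn : (X ^ n : F[X]).coeff (m - 1) = 0 := by
    rw [coeff_X_pow, if_neg (by omega)]
  rw [hxn] at hc
  have heq : ∑ i : Fin m, a i ^ n / ∏ j ∈ Finset.univ.erase i, (a i - a j)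
      = ∑ x : Fin m, a x ^ n * (Lagrange.basis Finset.univ a x).coeff (m - 1) :=
    sum_congr rfl fun i _ => by rw [hbasis i, div_eq_mul_inv]
  rw [heq, ← hc]
end

section
/- If a_1, ..., a_m (m ≥ 1) are pairwise distinct elements of a field, then ∑_{i=1}^m a_i^{m} / D_i = a_1 + a_2 + ... + a_m, where D_i = ∏_{j ≠ i} (a_i − a_j). -/
open Polynomial Lagrange Finset

theorem euler_sum_powers_over_differences_eq_sum
    {F : Type*} [Field F] (m : ℕ) (hm : 1 ≤ m)
    (a : Fin m → F) (ha : Function.Injective a) :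
    ∑ i : Fin m, a i ^ m / ∏ j ∈ Finset.univ.erase i, (a i - a j)
      = ∑ i : Fin m, a i := by
  have hinj : Set.InjOn a (Finset.univ : Finset (Fin m)) := ha.injOn
  have hcard : (Finset.univ : Finset (Fin m)).card = m := by simp
  -- the interpolating polynomial of the values a_i ^ m
  set P : F[X] := X ^ m - nodal Finset.univ a with hP
  have hdegnodal : (nodal Finset.univ a).degree = m := by
    rw [degree_nodal, hcard]
  have hdegP : P.degree < (Finset.univ : Finset (Fin m)).card := by
    rw [hcard]
    have : P.degree < (X ^ m : F[X]).degree := by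
      apply degree_sub_lt
      · rw [hdegnodal, degree_X_pow]
      · exact pow_ne_zero _ X_ne_zero
      · rw [(monic_X_pow m).leadingCoeff, nodal_monic.leadingCoeff]
    simpa using this
  have hPeq : P = interpolate Finset.univ a (fun i => a i ^ m) := by
    have h := eq_interpolate (f := P) hinj hdegP
    rw [h]
    congr 1
    funext i
    simp [hP, eval_nodal_at_node (Finset.mem_univ i)]
  -- compare coefficients at m - 1
  have hcoeffP : P.coeff (m - 1) = ∑ i : Fin m, a i := by
    have h0 : (X ^ m : F[X]).coeff (m - 1) = 0 := by
      rw [coeff_X_pow, if_neg (by omega)]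
    have h1 : (nodal Finset.univ a).coeff (m - 1) = -∑ i : Fin m, a i := by
      have := prod_X_sub_C_coeff_card_pred (Finset.univ : Finset (Fin m)) a
        (by rw [hcard]; omega)
      rw [hcard] at this
      simpa [nodal] using this
    rw [hP, coeff_sub, h0, h1]; ring
  have hbasis : ∀ i : Fin m, (Lagrange.basis Finset.univ a i).coeff (m - 1)
      = (∏ j ∈ Finset.univ.erase i, (a i - a j))⁻¹ := by
    intro i
    have hdeg : (Lagrange.basis Finset.univ a i).natDegree = m - 1 := by
      rw [natDegree_basis hinj (Finset.mem_univ i), hcard]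
    rw [← hdeg, ← leadingCoeff, Lagrange.basis, leadingCoeff_prod, ← Finset.prod_inv_distrib]
    refine Finset.prod_congr rfl fun j hj => ?_
    have hne : a i ≠ a j := fun h => (Finset.mem_erase.mp hj).1 (ha h).symm
    rw [basisDivisor, leadingCoeff_mul, leadingCoeff_C, (monic_X_sub_C (a j)).leadingCoeff,
      mul_one]
  have := hcoeffP
  rw [hPeq, interpolate_apply, finset_sum_coeff] at this
  simp only [coeff_C_mul, hbasis] at this
  rw [← this]
  exact Finset.sum_congr rfl fun i _ => (div_eq_mul_inv _ _)
end

section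
/- If a_1, ..., a_m (m ≥ 1) are pairwise distinct elements of a field, P = ∑_i a_i is the sum of the numbers and Q = ∑_{i<j} a_i a_j is the sum of their products taken two at a time, then ∑_{i=1}^m a_i^{m+1} / D_i = P² − Q, where D_i = ∏_{j ≠ i} (a_i − a_j). -/
open Polynomial Finset

lemma aux_coeff_basis {F : Type*} [Field F] {ι : Type*} [DecidableEq ι]
    {s : Finset ι} {v : ι → F} (hvs : Set.InjOn v s) {i : ι} (hi : i ∈ s) :
    (Lagrange.basis s v i).coeff (s.card - 1) = (∏ j ∈ s.erase i, (v i - v j))⁻¹ := by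
  have h1 : (Lagrange.basis s v i).coeff (s.card - 1) = (Lagrange.basis s v i).leadingCoeff := by
    rw [Polynomial.leadingCoeff, Lagrange.natDegree_basis hvs hi]
  rw [h1, Lagrange.basis, Polynomial.leadingCoeff_prod, ← Finset.prod_inv_distrib]
  refine Finset.prod_congr rfl fun j hj => ?_
  have hij : v i ≠ v j := by
    rcases Finset.mem_erase.mp hj with ⟨hne, hjs⟩
    exact fun h => hne (hvs hjs hi h.symm)
  rw [Lagrange.basisDivisor, Polynomial.leadingCoeff_mul, Polynomial.leadingCoeff_C]
  simp [Polynomial.leadingCoeff_X_sub_C]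

lemma aux_key_sum {F : Type*} [Field F] {m : ℕ} (a : Fin m → F)
    (ha : Function.Injective a) (f : F[X]) (hf : f.degree < m) :
    ∑ i : Fin m, f.eval (a i) / ∏ j ∈ Finset.univ.erase i, (a i - a j)
      = f.coeff (m - 1) := by
  have hvs : Set.InjOn a (Finset.univ : Finset (Fin m)) := ha.injOn
  have hcard : (Finset.univ : Finset (Fin m)).card = m := by simp
  have hf' : f.degree < ((Finset.univ : Finset (Fin m)).card : WithBot ℕ) := by
    rwa [hcard]
  conv_rhs => rw [Lagrange.eq_interpolate hvs hf']
  rw [Lagrange.interpolate_apply, Polynomial.finset_sum_coeff]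
  refine Finset.sum_congr rfl fun i hi => ?_
  have hb := aux_coeff_basis hvs hi
  rw [hcard] at hb
  rw [Polynomial.coeff_C_mul, hb, div_eq_mul_inv]

lemma aux_min'_pair {α : Type*} [DecidableEq α] [LinearOrder α] {x y : α} (h : x < y) (hne : ({x, y} : Finset α).Nonempty) :
    ({x, y} : Finset α).min' hne = x := by
  refine le_antisymm (Finset.min'_le _ x (by simp)) (Finset.le_min' _ _ _ fun b hb => ?_)
  rcases Finset.mem_insert.mp hb with rfl | hb
  · exact le_rfl
  · rw [Finset.mem_singleton.mp hb]; exact h.le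

lemma aux_max'_pair {α : Type*} [DecidableEq α] [LinearOrder α] {x y : α} (h : x < y) (hne : ({x, y} : Finset α).Nonempty) :
    ({x, y} : Finset α).max' hne = y := by
  refine le_antisymm (Finset.max'_le _ _ _ fun b hb => ?_) (Finset.le_max' _ y (by simp))
  rcases Finset.mem_insert.mp hb with rfl | hb
  · exact h.le
  · rw [Finset.mem_singleton.mp hb]

lemma aux_min'_pair' {α : Type*} [DecidableEq α] [LinearOrder α] {x y : α} (h : y < x) (hne : ({x, y} : Finset α).Nonempty) :
    ({x, y} : Finset α).min' hne = y := by
  rw [show ({x, y} : Finset α).min' hne = ({y, x} : Finset α).min' (by rw [Finset.pair_comm y x]; exact hne) from by congr 1; exact Finset.pair_comm x y]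
  exact aux_min'_pair h _

lemma aux_max'_pair' {α : Type*} [DecidableEq α] [LinearOrder α] {x y : α} (h : y < x) (hne : ({x, y} : Finset α).Nonempty) :
    ({x, y} : Finset α).max' hne = x := by
  rw [show ({x, y} : Finset α).max' hne = ({y, x} : Finset α).max' (by rw [Finset.pair_comm y x]; exact hne) from by congr 1; exact Finset.pair_comm x y]
  exact aux_max'_pair h _

lemma aux_pair_sum {F : Type*} [CommSemiring F] {m : ℕ} (hm : 1 ≤ m) (a : Fin m → F) :
    ∑ t ∈ Finset.powersetCard 2 (Finset.univ : Finset (Fin m)), t.prod a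
      = ∑ p ∈ Finset.univ.filter (fun p : Fin m × Fin m => p.1 < p.2),
          a p.1 * a p.2 := by
  have i0 : Fin m := ⟨0, hm⟩
  refine Finset.sum_nbij'
    (i := fun t => if h : t.Nonempty then (t.min' h, t.max' h) else (i0, i0))
    (j := fun p : Fin m × Fin m => ({p.1, p.2} : Finset (Fin m)))
    ?_ ?_ ?_ ?_ ?_
  · intro t ht
    have hc : t.card = 2 := (Finset.mem_powersetCard.mp ht).2
    have hne : t.Nonempty := Finset.card_pos.mp (by omega)
    rw [dif_pos hne]
    simp only [Finset.mem_filter, Finset.mem_univ, true_and]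
    exact Finset.min'_lt_max'_of_card t (by omega)
  · intro p hp
    have hlt : p.1 < p.2 := (Finset.mem_filter.mp hp).2
    rw [Finset.mem_powersetCard]
    exact ⟨Finset.subset_univ _, Finset.card_pair (ne_of_lt hlt)⟩
  · intro t ht
    have hc : t.card = 2 := (Finset.mem_powersetCard.mp ht).2
    obtain ⟨x, y, hxy, rfl⟩ := Finset.card_eq_two.mp hc
    have hne : ({x, y} : Finset (Fin m)).Nonempty := ⟨x, by simp⟩
    rw [dif_pos hne]
    rcases hxy.lt_or_gt with h | h
    · have hmin : ({x, y} : Finset (Fin m)).min' hne = x := by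
        exact aux_min'_pair h hne
      have hmax : ({x, y} : Finset (Fin m)).max' hne = y := by
        exact aux_max'_pair h hne
      rw [hmin, hmax]
    · have hmin : ({x, y} : Finset (Fin m)).min' hne = y := by
        exact aux_min'_pair' h hne
      have hmax : ({x, y} : Finset (Fin m)).max' hne = x := by
        exact aux_max'_pair' h hne
      rw [hmin, hmax, Finset.pair_comm]
  · intro p hp
    have hlt : p.1 < p.2 := (Finset.mem_filter.mp hp).2
    have hne : ({p.1, p.2} : Finset (Fin m)).Nonempty := ⟨p.1, by simp⟩
    rw [dif_pos hne]
    have hmin : ({p.1, p.2} : Finset (Fin m)).min' hne = p.1 := by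
      exact aux_min'_pair hlt hne
    have hmax : ({p.1, p.2} : Finset (Fin m)).max' hne = p.2 := by
      exact aux_max'_pair hlt hne
    rw [hmin, hmax]
  · intro t ht
    have hc : t.card = 2 := (Finset.mem_powersetCard.mp ht).2
    obtain ⟨x, y, hxy, rfl⟩ := Finset.card_eq_two.mp hc
    have hne : ({x, y} : Finset (Fin m)).Nonempty := ⟨x, by simp⟩
    rw [dif_pos hne]
    rcases hxy.lt_or_gt with h | h
    · have hmin : ({x, y} : Finset (Fin m)).min' hne = x := by
        exact aux_min'_pair h hne
      have hmax : ({x, y} : Finset (Fin m)).max' hne = y := by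
        exact aux_max'_pair h hne
      rw [hmin, hmax, Finset.prod_pair hxy]
    · have hmin : ({x, y} : Finset (Fin m)).min' hne = y := by
        exact aux_min'_pair' h hne
      have hmax : ({x, y} : Finset (Fin m)).max' hne = x := by
        exact aux_max'_pair' h hne
      rw [hmin, hmax, Finset.prod_pair hxy, mul_comm]

theorem euler_sum_powers_over_differences_m_add_one
    {F : Type*} [Field F] (m : ℕ) (hm : 1 ≤ m)
    (a : Fin m → F) (ha : Function.Injective a)
    (P Q : F)
    (hP : P = ∑ i : Fin m, a i)
    (hQ : Q = ∑ p ∈ Finset.univ.filter (fun p : Fin m × Fin m => p.1 < p.2),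
      a p.1 * a p.2) :
    ∑ i : Fin m, a i ^ (m + 1) / ∏ j ∈ Finset.univ.erase i, (a i - a j)
      = P ^ 2 - Q := by
  rcases Nat.lt_or_ge m 2 with h2 | h2
  · -- m = 1
    interval_cases m
    have hQ0 : Q = 0 := by
      rw [hQ]
      refine Finset.sum_eq_zero fun p hp => ?_
      have := (Finset.mem_filter.mp hp).2
      exact absurd this (by omega)
    subst hP
    simp [Fin.sum_univ_one, hQ0, sq]
  · -- m ≥ 2
    set g : F[X] := ∏ i : Fin m, (X - C (a i)) with hg_def
    have hg_monic : g.Monic :=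
      Polynomial.monic_prod_of_monic _ _ fun i _ => Polynomial.monic_X_sub_C _
    have hg_deg : g.natDegree = m := by
      rw [hg_def, Polynomial.natDegree_prod _ _ (fun i _ => Polynomial.X_sub_C_ne_zero _)]
      simp
    have hgm : g.coeff m = 1 := by
      have := hg_monic.coeff_natDegree
      rwa [hg_deg] at this
    have hgtop : ∀ k, m < k → g.coeff k = 0 := fun k hk =>
      Polynomial.coeff_eq_zero_of_natDegree_lt (hg_deg ▸ hk)
    have hg1 : g.coeff (m - 1) = -P := by
      have := Polynomial.prod_X_sub_C_coeff_card_pred (Finset.univ : Finset (Fin m)) a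
        (by simp; omega)
      simpa [hP] using this
    have hg2 : g.coeff (m - 2) = Q := by
      have hcard : Multiset.card (Multiset.map a (Finset.univ : Finset (Fin m)).val) = m := by
        simp
      have hk : m - 2 ≤ Multiset.card (Multiset.map a (Finset.univ : Finset (Fin m)).val) := by
        omega
      have h := Multiset.prod_X_sub_C_coeff (Multiset.map a (Finset.univ : Finset (Fin m)).val) hk
      have hgeq : g = (Multiset.map (fun t => X - C t)
          (Multiset.map a (Finset.univ : Finset (Fin m)).val)).prod := by
        rw [hg_def, Finset.prod_eq_multiset_prod, Multiset.map_map]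
        rfl
      rw [hgeq, h, hcard]
      have h2' : m - (m - 2) = 2 := by omega
      rw [h2', Finset.esymm_map_val, aux_pair_sum hm a, hQ]
      ring
    set f : F[X] := X ^ (m + 1) - (X + C P) * g with hf_def
    have h_coeff : ∀ n : ℕ, f.coeff (n + 1)
        = (X ^ (m + 1) : F[X]).coeff (n + 1) - (g.coeff n + P * g.coeff (n + 1)) := by
      intro n
      rw [hf_def, Polynomial.coeff_sub, add_mul, Polynomial.coeff_add,
        Polynomial.coeff_X_mul, Polynomial.coeff_C_mul]
    have hdeg : f.degree < (m : WithBot ℕ) := by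
      rw [Polynomial.degree_lt_iff_coeff_zero]
      intro k hk
      have hk' : (m : ℕ) ≤ k := by exact_mod_cast hk
      obtain ⟨n, rfl⟩ : ∃ n, k = n + 1 := ⟨k - 1, by omega⟩
      rw [h_coeff n, Polynomial.coeff_X_pow]
      rcases Nat.lt_trichotomy (n + 1) (m + 1) with h | h | h
      · -- n + 1 = m
        have hn : n + 1 = m := by omega
        have hn' : n = m - 1 := by omega
        rw [if_neg (by omega), hn, hn', hgm, hg1]
        ring
      · -- n + 1 = m + 1
        have hn : n = m := by omega
        rw [if_pos h, hn, hgm, hgtop _ (by omega)]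
        ring
      · rw [if_neg (by omega), hgtop _ (by omega), hgtop _ (by omega)]
        ring
    have heval : ∀ i : Fin m, f.eval (a i) = a i ^ (m + 1) := by
      intro i
      have hgz : g.eval (a i) = 0 := by
        rw [hg_def, Polynomial.eval_prod]
        exact Finset.prod_eq_zero (Finset.mem_univ i) (by simp)
      simp [hf_def, hgz]
    have hmain : f.coeff (m - 1) = P ^ 2 - Q := by
      have hm1 : m - 1 = (m - 2) + 1 := by omega
      rw [hm1, h_coeff (m - 2), Polynomial.coeff_X_pow, if_neg (by omega), hg2, ← hm1, hg1]
      ring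
    calc ∑ i : Fin m, a i ^ (m + 1) / ∏ j ∈ Finset.univ.erase i, (a i - a j)
        = ∑ i : Fin m, f.eval (a i) / ∏ j ∈ Finset.univ.erase i, (a i - a j) := by
          refine Finset.sum_congr rfl fun i _ => ?_
          rw [heval i]
      _ = f.coeff (m - 1) := aux_key_sum a ha f hdeg
      _ = P ^ 2 - Q := hmain
end

section
/- If a_1, ..., a_m (m ≥ 1) are pairwise distinct elements of a field, P = ∑_i a_i, Q = ∑_{i<j} a_i a_j, and R = ∑_{i<j<k} a_i a_j a_k, then ∑_{i=1}^m a_i^{m+2} / D_i = P³ − 2PQ + R, where D_i = ∏_{j ≠ i} (a_i − a_j). -/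
open Finset Polynomial

-- top coefficient of Lagrange interpolation
lemma euler_aux_coeff {F : Type*} [Field F] {ι : Type*} [DecidableEq ι]
    (s : Finset ι) (v : ι → F) (r : ι → F) :
    (Lagrange.interpolate s v r).coeff (#s - 1) =
      ∑ i ∈ s, r i * (∏ j ∈ s.erase i, (v i - v j))⁻¹ := by
  rw [Lagrange.interpolate_apply, Polynomial.finset_sum_coeff]
  refine Finset.sum_congr rfl fun i hi => ?_
  rw [Lagrange.basis_eq_prod_sub_inv_mul_nodal_div hi,
      ← Lagrange.nodal_erase_eq_nodal_div hi, Polynomial.coeff_C_mul,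
      Polynomial.coeff_C_mul]
  have h1 : #(s.erase i) = #s - 1 := Finset.card_erase_of_mem hi
  have h3 : (Lagrange.nodal (s.erase i) v).natDegree = #(s.erase i) :=
    Lagrange.natDegree_nodal
  have h2 : (Lagrange.nodal (s.erase i) v).coeff (#s - 1) = 1 := by
    rw [← h1, ← h3]; exact Lagrange.nodal_monic.coeff_natDegree
  rw [h2, Lagrange.nodalWeight, ← Finset.prod_inv_distrib]
  ring

-- values of the divided-difference sums for low powers
lemma euler_aux_low {F : Type*} [Field F] {m : ℕ} (hm : 1 ≤ m)
    (a : Fin m → F) (ha : Function.Injective a) (k : ℕ) (hk : k < m) :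
    ∑ i : Fin m, a i ^ k * (∏ j ∈ Finset.univ.erase i, (a i - a j))⁻¹
      = if k = m - 1 then 1 else 0 := by
  have hvs : Set.InjOn a ↑(Finset.univ : Finset (Fin m)) := ha.injOn
  have hcard : #(Finset.univ : Finset (Fin m)) = m := by simp
  have hdeg : ((X : F[X]) ^ k).degree < #(Finset.univ : Finset (Fin m)) := by
    rw [Polynomial.degree_X_pow, hcard]
    exact_mod_cast hk
  have hinterp := Lagrange.eq_interpolate hvs hdeg
  have key : ∑ i : Fin m, a i ^ k * (∏ j ∈ Finset.univ.erase i, (a i - a j))⁻¹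
      = ((X : F[X]) ^ k).coeff (m - 1) := by
    conv_rhs => rw [hinterp]
    rw [show m - 1 = #(Finset.univ : Finset (Fin m)) - 1 by rw [hcard],
      euler_aux_coeff]
    simp
  rw [key, Polynomial.coeff_X_pow]
  by_cases h : k = m - 1 <;> simp [h, eq_comm]

-- expansion of the nodal product into elementary symmetric functions
lemma euler_aux_expand {F : Type*} [CommRing F] {m : ℕ} (a : Fin m → F) (x : F) :
    ∏ j : Fin m, (x - a j)
      = ∑ k ∈ Finset.range (m + 1),
          (-1 : F) ^ k * (∑ t ∈ Finset.univ.powersetCard k, ∏ j ∈ t, a j) * x ^ (m - k) := by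
  have hc : #(Finset.univ : Finset (Fin m)) = m := by simp
  have h := Finset.prod_add (fun j : Fin m => -a j) (fun _ => x) Finset.univ
  have h0 : ∏ j : Fin m, (x - a j) = ∏ j : Fin m, (-a j + x) := by
    refine Finset.prod_congr rfl fun j _ => by ring
  rw [h0, h, Finset.sum_powerset, hc]
  refine Finset.sum_congr rfl fun k hk => ?_
  rw [Finset.mul_sum, Finset.sum_mul]
  refine Finset.sum_congr rfl fun t ht => ?_
  obtain ⟨hts, htc⟩ := Finset.mem_powersetCard.mp ht
  have h1 : ∏ j ∈ t, (-a j) = (-1 : F) ^ k * ∏ j ∈ t, a j := by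
    rw [← htc]
    calc ∏ j ∈ t, (-a j) = ∏ j ∈ t, ((-1 : F) * a j) :=
          Finset.prod_congr rfl fun j _ => by ring
      _ = (-1 : F) ^ #t * ∏ j ∈ t, a j := by
          rw [Finset.prod_mul_distrib, Finset.prod_const]
  have h2 : ∏ j ∈ Finset.univ \ t, x = x ^ (m - k) := by
    rw [Finset.prod_const, Finset.card_sdiff_of_subset (Finset.subset_univ t), htc, hc]
  simp only [h1, h2]
  try ring

theorem euler_sum_powers_over_differences_m_add_two
    {F : Type*} [Field F] (m : ℕ) (hm : 1 ≤ m)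
    (a : Fin m → F) (ha : Function.Injective a)
    (P Q R : F)
    (hP : P = ∑ s ∈ Finset.univ.powersetCard 1, ∏ i ∈ s, a i)
    (hQ : Q = ∑ s ∈ Finset.univ.powersetCard 2, ∏ i ∈ s, a i)
    (hR : R = ∑ s ∈ Finset.univ.powersetCard 3, ∏ i ∈ s, a i) :
    ∑ i : Fin m, a i ^ (m + 2) / ∏ j ∈ Finset.univ.erase i, (a i - a j)
      = P ^ 3 - 2 * P * Q + R := by
  set E : ℕ → F := fun k => ∑ t ∈ Finset.univ.powersetCard k, ∏ j ∈ t, a j with hE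
  set w : Fin m → F := fun i => (∏ j ∈ Finset.univ.erase i, (a i - a j))⁻¹ with hw
  set S : ℕ → F := fun k => ∑ i : Fin m, a i ^ k * w i with hS
  -- low values
  have hS0 : ∀ n, n < m → n ≠ m - 1 → S n = 0 := by
    intro n h1 h2
    have h := euler_aux_low hm a ha n h1
    rw [if_neg h2] at h
    exact h
  have hS1 : S (m - 1) = 1 := by
    have h := euler_aux_low hm a ha (m - 1) (by omega)
    rw [if_pos rfl] at h
    exact h
  -- vanishing of large elementary symmetric functions
  have hEzero : ∀ k, m < k → E k = 0 := by
    intro k hk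
    show (∑ t ∈ Finset.univ.powersetCard k, ∏ j ∈ t, a j) = 0
    rw [Finset.powersetCard_eq_empty.mpr (by simpa using hk), Finset.sum_empty]
  have hE0 : E 0 = 1 := by
    show (∑ t ∈ Finset.univ.powersetCard 0, ∏ j ∈ t, a j) = 1
    simp
  -- pointwise relation: a i ^ m in terms of lower powers
  have hpoint : ∀ i : Fin m,
      a i ^ m = ∑ k ∈ Finset.range m, (-1 : F) ^ k * E (k + 1) * a i ^ (m - 1 - k) := by
    intro i
    have h0 : (0 : F) = ∑ k ∈ Finset.range (m + 1), (-1 : F) ^ k * E k * a i ^ (m - k) := by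
      simp only [hE]
      rw [← euler_aux_expand a (a i)]
      exact (Finset.prod_eq_zero (f := fun j => a i - a j) (Finset.mem_univ i)
        (sub_self (a i))).symm
    rw [Finset.sum_range_succ'] at h0
    simp only [pow_zero, one_mul, hE0, Nat.sub_zero] at h0
    have h1 : a i ^ m
        = -∑ k ∈ Finset.range m, (-1 : F) ^ (k + 1) * E (k + 1) * a i ^ (m - (k + 1)) :=
      eq_neg_of_add_eq_zero_right h0.symm
    rw [h1, ← Finset.sum_neg_distrib]
    refine Finset.sum_congr rfl fun k hk => ?_
    have hkk : m - (k + 1) = m - 1 - k := by omega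
    rw [hkk, pow_succ]
    ring
  -- recurrence for S (m + j)
  have hrec : ∀ j : ℕ,
      S (m + j) = ∑ k ∈ Finset.range m, (-1 : F) ^ k * E (k + 1) * S (m + j - (k + 1)) := by
    intro j
    have hpow : ∀ i : Fin m,
        a i ^ (m + j)
          = ∑ k ∈ Finset.range m, (-1 : F) ^ k * E (k + 1) * a i ^ (m + j - (k + 1)) := by
      intro i
      have hx : a i ^ (m + j) = a i ^ m * a i ^ j := by rw [← pow_add]
      rw [hx, hpoint i, Finset.sum_mul]
      refine Finset.sum_congr rfl fun k hk => ?_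
      rw [Finset.mem_range] at hk
      have hkk : m - 1 - k + j = m + j - (k + 1) := by omega
      rw [mul_assoc, ← pow_add, hkk]
    calc S (m + j) = ∑ i : Fin m, a i ^ (m + j) * w i := rfl
      _ = ∑ i : Fin m, ∑ k ∈ Finset.range m,
            (-1 : F) ^ k * E (k + 1) * (a i ^ (m + j - (k + 1)) * w i) := by
          refine Finset.sum_congr rfl fun i _ => ?_
          rw [hpow i, Finset.sum_mul]
          refine Finset.sum_congr rfl fun k _ => by ring
      _ = ∑ k ∈ Finset.range m, ∑ i : Fin m,
            (-1 : F) ^ k * E (k + 1) * (a i ^ (m + j - (k + 1)) * w i) := Finset.sum_comm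
      _ = ∑ k ∈ Finset.range m, (-1 : F) ^ k * E (k + 1) * S (m + j - (k + 1)) := by
          refine Finset.sum_congr rfl fun k _ => ?_
          rw [← Finset.mul_sum]
  have hterm : ∀ j k : ℕ, j + 1 ≤ k → k + 1 ≤ m → S (m + j - (k + 1)) = 0 := by
    intro j k hjk hkm
    exact hS0 (m + j - (k + 1)) (by omega) (by omega)
  -- truncate the recurrence to the first three terms
  have hrec3 : ∀ j : ℕ, j ≤ 2 →
      S (m + j) = E 1 * S (m + j - 1) - E 2 * S (m + j - 2) + E 3 * S (m + j - 3) := by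
    intro j hj
    rw [hrec j]
    have hstep1 : ∑ k ∈ Finset.range m, (-1 : F) ^ k * E (k + 1) * S (m + j - (k + 1))
        = ∑ k ∈ Finset.range (m + 3), (-1 : F) ^ k * E (k + 1) * S (m + j - (k + 1)) := by
      refine Finset.sum_subset (Finset.range_subset_range.mpr (by omega)) fun k _ hk => ?_
      rw [Finset.mem_range, not_lt] at hk
      rw [hEzero (k + 1) (by omega)]
      ring
    have hstep2 : ∑ k ∈ Finset.range (m + 3), (-1 : F) ^ k * E (k + 1) * S (m + j - (k + 1))
        = ∑ k ∈ Finset.range 3, (-1 : F) ^ k * E (k + 1) * S (m + j - (k + 1)) := by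
      refine (Finset.sum_subset (Finset.range_subset_range.mpr (by omega)) fun k _ hk => ?_).symm
      rw [Finset.mem_range, not_lt] at hk
      rcases le_or_gt (k + 1) m with h | h
      · rw [hterm j k (by omega) h]
        ring
      · rw [hEzero (k + 1) (by omega)]
        ring
    rw [hstep1, hstep2, Finset.sum_range_succ, Finset.sum_range_succ, Finset.sum_range_succ,
      Finset.sum_range_zero]
    norm_num
    try ring
  have hrec3' : ∀ j n1 n2 n3 : ℕ, j ≤ 2 → m + j - 1 = n1 → m + j - 2 = n2 → m + j - 3 = n3 →
      S (m + j) = E 1 * S n1 - E 2 * S n2 + E 3 * S n3 := by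
    intro j n1 n2 n3 hj e1 e2 e3
    rw [← e1, ← e2, ← e3]
    exact hrec3 j hj
  -- the zero products needed
  have hz2 : E 2 * S (m - 2) = 0 := by
    rcases le_or_gt 2 m with h | h
    · rw [hS0 (m - 2) (by omega) (by omega), mul_zero]
    · rw [hEzero 2 (by omega), zero_mul]
  have hz3 : E 3 * S (m - 3) = 0 := by
    rcases le_or_gt 3 m with h | h
    · rw [hS0 (m - 3) (by omega) (by omega), mul_zero]
    · rw [hEzero 3 (by omega), zero_mul]
  have hz3' : E 3 * S (m - 2) = 0 := by
    rcases le_or_gt 3 m with h | h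
    · rw [hS0 (m - 2) (by omega) (by omega), mul_zero]
    · rw [hEzero 3 (by omega), zero_mul]
  -- compute S m, S (m+1), S (m+2)
  have e0 : S m = E 1 := by
    have h := hrec3' 0 (m - 1) (m - 2) (m - 3) (by omega) (by omega) (by omega) (by omega)
    rw [hS1] at h
    calc S m = S (m + 0) := rfl
      _ = E 1 * 1 - E 2 * S (m - 2) + E 3 * S (m - 3) := h
      _ = E 1 := by rw [hz2, hz3]; ring
  have e1 : S (m + 1) = E 1 * E 1 - E 2 := by
    have h := hrec3' 1 m (m - 1) (m - 2) (by omega) (by omega) (by omega) (by omega)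
    rw [hS1, e0, hz3'] at h
    rw [h]; ring
  have e2 : S (m + 2) = E 1 * (E 1 * E 1 - E 2) - E 2 * E 1 + E 3 := by
    have h := hrec3' 2 (m + 1) m (m - 1) (by omega) (by omega) (by omega) (by omega)
    rw [hS1, e0, e1] at h
    rw [h]; ring
  -- finish
  have hfin : ∑ i : Fin m, a i ^ (m + 2) / ∏ j ∈ Finset.univ.erase i, (a i - a j)
      = S (m + 2) := by
    refine Finset.sum_congr rfl fun i _ => ?_
    simp only [hw, div_eq_mul_inv]
  have hP' : E 1 = P := by rw [hP]
  have hQ' : E 2 = Q := by rw [hQ]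
  have hR' : E 3 = R := by rw [hR]
  rw [hfin, e2, hP', hQ', hR']
  ring
end

section
/- If a_1, ..., a_m (m ≥ 1) are pairwise distinct elements of a field, and P, Q, R, S denote the first four elementary symmetric functions of a_1, ..., a_m, then ∑_{i=1}^m a_i^{m+3} / D_i = P⁴ − 3P²Q + 2PR + Q² − S, where D_i = ∏_{j ≠ i} (a_i − a_j). -/
open Polynomial Finset

theorem euler_sum_powers_over_differences_m_add_three
    {F : Type*} [Field F] (m : ℕ) (hm : 1 ≤ m)
    (a : Fin m → F) (ha : Function.Injective a)
    (P Q R S : F)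
    (hP : P = ∑ s ∈ Finset.univ.powersetCard 1, ∏ i ∈ s, a i)
    (hQ : Q = ∑ s ∈ Finset.univ.powersetCard 2, ∏ i ∈ s, a i)
    (hR : R = ∑ s ∈ Finset.univ.powersetCard 3, ∏ i ∈ s, a i)
    (hS : S = ∑ s ∈ Finset.univ.powersetCard 4, ∏ i ∈ s, a i) :
    ∑ i : Fin m, a i ^ (m + 3) / ∏ j ∈ Finset.univ.erase i, (a i - a j)
      = P ^ 4 - 3 * P ^ 2 * Q + 2 * P * R + Q ^ 2 - S := by
  classical
  set E : ℕ → F := fun k => ∑ s ∈ Finset.univ.powersetCard k, ∏ i ∈ s, a i with hE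
  have hP' : P = E 1 := hP
  have hQ' : Q = E 2 := hQ
  have hR' : R = E 3 := hR
  have hS' : S = E 4 := hS
  have hE0 : E 0 = 1 := by simp [hE]
  have hEbig : ∀ k, m < k → E k = 0 := by
    intro k hk
    have : (Finset.univ : Finset (Fin m)).powersetCard k = ∅ := by
      rw [Finset.powersetCard_eq_empty]; simpa using hk
    simp [hE, this]
  set f : F[X] := ∏ i : Fin m, (X - C (a i)) with hf
  have hfm : f = ((Finset.univ.val.map a).map fun t => X - C t).prod := by
    rw [hf, Finset.prod_eq_multiset_prod, Multiset.map_map]; rfl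
  have hcard : Multiset.card (Finset.univ.val.map a) = m := by simp
  have hfc : ∀ j, j ≤ m → f.coeff j = (-1) ^ (m - j) * E (m - j) := by
    intro j hj
    rw [hfm, Multiset.prod_X_sub_C_coeff _ (by rw [hcard]; exact hj), hcard,
      Finset.esymm_map_val]
  have hndeg : f.natDegree = m := by
    rw [hf, Polynomial.natDegree_prod_of_monic _ _ fun i _ => monic_X_sub_C _]
    simp
  have hfc' : ∀ j, m < j → f.coeff j = 0 := by
    intro j hj
    exact Polynomial.coeff_eq_zero_of_natDegree_lt (by omega : f.natDegree < j)
  have L : ∀ d r : ℕ, r ≤ d + m → (f * X ^ d).coeff (m + d - r) = (-1) ^ r * E r := by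
    intro d r hr
    rw [Polynomial.coeff_mul_X_pow']
    by_cases h : r ≤ m
    · rw [if_pos (by omega)]
      have h1 : m + d - r - d = m - r := by omega
      rw [h1, hfc (m - r) (by omega)]
      have h2 : m - (m - r) = r := by omega
      rw [h2]
    · rw [if_neg (by omega), hEbig r (by omega), mul_zero]
  have L0 : ∀ d k : ℕ, m + d < k → (f * X ^ d).coeff k = 0 := by
    intro d k hk
    rw [Polynomial.coeff_mul_X_pow']
    split_ifs with h
    · exact hfc' _ (by omega)
    · rfl
  set g : F[X] := f * X ^ 3 + C P * (f * X ^ 2) + C (P ^ 2 - Q) * (f * X ^ 1)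
      + C (P ^ 3 - 2 * P * Q + R) * (f * X ^ 0) with hg
  set r : F[X] := X ^ (m + 3) - g with hr
  have hrdeg : r.degree < ((Finset.univ : Finset (Fin m)).card : WithBot ℕ) := by
    rw [Finset.card_univ, Fintype.card_fin]
    rw [Polynomial.degree_lt_iff_coeff_zero]
    intro k hk
    rw [hr, hg]
    simp only [Polynomial.coeff_sub, Polynomial.coeff_add, Polynomial.coeff_C_mul,
      Polynomial.coeff_X_pow]
    rcases (by omega : k = m ∨ k = m + 1 ∨ k = m + 2 ∨ k = m + 3 ∨ m + 4 ≤ k) with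
      h | h | h | h | h
    · rw [h]
      have t3 := L 3 3 (by omega); rw [show m + 3 - 3 = m from by omega] at t3
      have t2 := L 2 2 (by omega); rw [show m + 2 - 2 = m from by omega] at t2
      have t1 := L 1 1 (by omega); rw [show m + 1 - 1 = m from by omega] at t1
      have t0 := L 0 0 (by omega); rw [show m + 0 - 0 = m from by omega] at t0
      rw [t3, t2, t1, t0, if_neg (by omega), hE0, ← hP', ← hQ', ← hR']
      ring
    · subst h
      have t3 := L 3 2 (by omega); rw [show m + 3 - 2 = m + 1 from by omega] at t3
      have t2 := L 2 1 (by omega); rw [show m + 2 - 1 = m + 1 from by omega] at t2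
      have t1 := L 1 0 (by omega); rw [show m + 1 - 0 = m + 1 from by omega] at t1
      have t0 := L0 0 (m + 1) (by omega)
      rw [t3, t2, t1, t0, if_neg (by omega), hE0, ← hP', ← hQ']
      ring
    · subst h
      have t3 := L 3 1 (by omega); rw [show m + 3 - 1 = m + 2 from by omega] at t3
      have t2 := L 2 0 (by omega); rw [show m + 2 - 0 = m + 2 from by omega] at t2
      have t1 := L0 1 (m + 2) (by omega)
      have t0 := L0 0 (m + 2) (by omega)
      rw [t3, t2, t1, t0, if_neg (by omega), hE0, ← hP']
      ring
    · subst h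
      have t3 := L 3 0 (by omega); rw [show m + 3 - 0 = m + 3 from by omega] at t3
      have t2 := L0 2 (m + 3) (by omega)
      have t1 := L0 1 (m + 3) (by omega)
      have t0 := L0 0 (m + 3) (by omega)
      rw [t3, t2, t1, t0, if_pos rfl, hE0]
      ring
    · rw [L0 3 k (by omega), L0 2 k (by omega), L0 1 k (by omega), L0 0 k (by omega),
        if_neg (by omega)]
      ring
  have hf0 : ∀ i : Fin m, f.eval (a i) = 0 := by
    intro i
    rw [hf, Polynomial.eval_prod]
    exact Finset.prod_eq_zero (Finset.mem_univ i) (by simp)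
  have hreval : ∀ i : Fin m, r.eval (a i) = a i ^ (m + 3) := by
    intro i
    simp [hr, hg, hf0 i]
  have hinj : Set.InjOn a (Finset.univ : Finset (Fin m)) := fun x _ y _ h => ha h
  have hinterp : r = Lagrange.interpolate Finset.univ a fun i => a i ^ (m + 3) :=
    Lagrange.eq_interpolate_of_eval_eq _ hinj hrdeg fun i _ => hreval i
  have hbasis : ∀ i : Fin m, (Lagrange.basis Finset.univ a i).coeff (m - 1)
      = (∏ j ∈ Finset.univ.erase i, (a i - a j))⁻¹ := by
    intro i
    have hmono : (∏ j ∈ Finset.univ.erase i, (X - C (a j))).Monic :=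
      monic_prod_of_monic _ _ fun j _ => monic_X_sub_C _
    have hnd : (∏ j ∈ Finset.univ.erase i, (X - C (a j))).natDegree = m - 1 := by
      rw [Polynomial.natDegree_prod_of_monic _ _ fun j _ => monic_X_sub_C _]
      simp [Finset.card_erase_of_mem]
    simp only [Lagrange.basis, Lagrange.basisDivisor]
    rw [Finset.prod_mul_distrib, ← map_prod, Polynomial.coeff_C_mul, ← hnd,
      hmono.coeff_natDegree, mul_one, ← Finset.prod_inv_distrib]
  have hcoeff_int : (Lagrange.interpolate Finset.univ a fun i => a i ^ (m + 3)).coeff (m - 1)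
      = ∑ i : Fin m, a i ^ (m + 3) / ∏ j ∈ Finset.univ.erase i, (a i - a j) := by
    rw [Lagrange.interpolate_apply, Polynomial.finset_sum_coeff]
    refine Finset.sum_congr rfl fun i _ => ?_
    rw [Polynomial.coeff_C_mul, hbasis i, div_eq_mul_inv]
  rw [← hcoeff_int, ← hinterp, hr, hg]
  simp only [Polynomial.coeff_sub, Polynomial.coeff_add, Polynomial.coeff_C_mul,
    Polynomial.coeff_X_pow]
  have t3 := L 3 4 (by omega); rw [show m + 3 - 4 = m - 1 from by omega] at t3
  have t2 := L 2 3 (by omega); rw [show m + 2 - 3 = m - 1 from by omega] at t2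
  have t1 := L 1 2 (by omega); rw [show m + 1 - 2 = m - 1 from by omega] at t1
  have t0 := L 0 1 (by omega); rw [show m + 0 - 1 = m - 1 from by omega] at t0
  rw [t3, t2, t1, t0, if_neg (by omega), ← hP', ← hQ', ← hR', ← hS']
  ring
end

section
/- Let a_1, ..., a_m be elements of a commutative ring, let p_j = a_1^j + ... + a_m^j denote the power sum of degree j, and let h_k denote the complete homogeneous symmetric function of degree k in a_1, ..., a_m. Then for every k ≥ 1 one has k·h_k = ∑_{j=1}^{k} p_j h_{k−j}. -/
private lemma sigma_sym_ext {m k : ℕ} (x y : Σ j : ℕ, Sym (Fin m) (k - j))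
    (h1 : x.1 = y.1) (h2 : x.2.val = y.2.val) : x = y := by
  obtain ⟨j1, s1⟩ := x
  obtain ⟨j2, s2⟩ := y
  dsimp at h1
  subst h1
  exact congrArg _ (Subtype.ext h2)

private lemma key_count {R : Type*} [CommRing R] {m k : ℕ} (a : Fin m → R) (i : Fin m) :
    ∑ j ∈ Finset.Icc 1 k, ∑ ν : Sym (Fin m) (k - j), a i ^ j * (ν.val.map a).prod
      = ∑ μ : Sym (Fin m) k, (Multiset.count i μ.val : R) * (μ.val.map a).prod := by
  have hrhs : ∀ μ : Sym (Fin m) k,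
      (Multiset.count i μ.val : R) * (μ.val.map a).prod
        = ∑ j ∈ Finset.Icc 1 (Multiset.count i μ.val), (μ.val.map a).prod := by
    intro μ
    rw [Finset.sum_const, Nat.card_Icc, nsmul_eq_mul]
    simp
  simp_rw [hrhs]
  rw [Finset.sum_sigma', Finset.sum_sigma']
  refine Finset.sum_bij'
    (fun x hx => ⟨⟨Multiset.replicate (k - Multiset.card x.2.val) i + x.2.val, ?_⟩,
      k - Multiset.card x.2.val⟩)
    (fun y hy => ⟨y.2, ⟨y.1.val - Multiset.replicate y.2 i, ?_⟩⟩) ?_ ?_ ?_ ?_ ?_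
  · -- card of forward multiset
    simp only [Multiset.card_add, Multiset.card_replicate]
    rw [x.2.prop]
    exact Nat.sub_add_cancel (Nat.sub_le k _)
  · -- card of backward multiset
    simp only [Finset.mem_sigma, Finset.mem_univ, Finset.mem_Icc, true_and, and_true] at hy
    have hle : Multiset.replicate y.2 i ≤ y.1.val :=
      Multiset.le_count_iff_replicate_le.mp hy.2
    rw [Multiset.card_sub hle, Multiset.card_replicate, y.1.prop]
  · -- forward membership
    intro x hx
    simp only [Finset.mem_sigma, Finset.mem_univ, Finset.mem_Icc, true_and, and_true] at hx ⊢
    have hcard : Multiset.card x.2.val = k - x.1 := x.2.prop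
    have h1 : k - Multiset.card x.2.val = x.1 := by
      rw [hcard, Nat.sub_sub_self hx.2]
    refine ⟨Finset.mem_univ _, ?_⟩
    constructor
    · rw [h1]; exact hx.1
    · rw [h1, Multiset.count_add, Multiset.count_replicate_self]
      exact Nat.le_add_right _ _
  · -- backward membership
    intro y hy
    simp only [Finset.mem_sigma, Finset.mem_univ, Finset.mem_Icc, true_and, and_true] at hy ⊢
    exact ⟨⟨hy.1, hy.2.trans ((Multiset.count_le_card i _).trans_eq y.1.prop)⟩, Finset.mem_univ _⟩
  · -- left inverse
    intro x hx
    simp only [Finset.mem_sigma, Finset.mem_univ, Finset.mem_Icc, true_and, and_true] at hx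
    have hcard : Multiset.card x.2.val = k - x.1 := x.2.prop
    have h1 : k - Multiset.card x.2.val = x.1 := by
      rw [hcard, Nat.sub_sub_self hx.2]
    refine sigma_sym_ext _ _ h1 ?_
    show (Multiset.replicate (k - Multiset.card x.2.val) i + x.2.val)
        - Multiset.replicate (k - Multiset.card x.2.val) i = x.2.val
    rw [h1]
    simp
  · -- right inverse
    intro y hy
    simp only [Finset.mem_sigma, Finset.mem_univ, Finset.mem_Icc, true_and, and_true] at hy
    have hle : Multiset.replicate y.2 i ≤ y.1.val :=
      Multiset.le_count_iff_replicate_le.mp hy.2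
    have hcard : Multiset.card (y.1.val - Multiset.replicate y.2 i) = k - y.2 := by
      rw [Multiset.card_sub hle, Multiset.card_replicate, y.1.prop]
    have hj : k - Multiset.card (y.1.val - Multiset.replicate y.2 i) = y.2 := by
      rw [hcard, Nat.sub_sub_self (hy.2.trans ((Multiset.count_le_card i _).trans_eq y.1.prop))]
    refine Sigma.ext ?_ (heq_of_eq hj)
    refine Subtype.ext ?_
    show Multiset.replicate (k - Multiset.card (y.1.val - Multiset.replicate y.2 i)) i
        + (y.1.val - Multiset.replicate y.2 i) = y.1.val
    rw [hj, add_comm]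
    exact tsub_add_cancel_of_le hle
  · -- values equal
    intro x hx
    simp only [Finset.mem_sigma, Finset.mem_univ, Finset.mem_Icc, true_and, and_true] at hx
    have hcard : Multiset.card x.2.val = k - x.1 := x.2.prop
    have h1 : k - Multiset.card x.2.val = x.1 := by
      rw [hcard, Nat.sub_sub_self hx.2]
    simp only [Multiset.map_add, Multiset.prod_add, Multiset.map_replicate,
      Multiset.prod_replicate, h1]

theorem hsymm_psum_recurrence
    {R : Type*} [CommRing R] (m : ℕ) (a : Fin m → R)
    (p : ℕ → R) (hp : ∀ j, p j = ∑ i : Fin m, a i ^ j)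
    (h : ℕ → R) (hh : ∀ k, h k = ∑ μ : Sym (Fin m) k, (μ.val.map a).prod)
    (k : ℕ) (hk : 1 ≤ k) :
    (k : R) * h k = ∑ j ∈ Finset.Icc 1 k, p j * h (k - j) := by
  have key : ∑ j ∈ Finset.Icc 1 k, ∑ i : Fin m, ∑ ν : Sym (Fin m) (k - j),
      a i ^ j * (ν.val.map a).prod
      = ∑ μ : Sym (Fin m) k, (k : R) * (μ.val.map a).prod := by
    rw [Finset.sum_comm]
    calc ∑ i : Fin m, ∑ j ∈ Finset.Icc 1 k, ∑ ν : Sym (Fin m) (k - j),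
            a i ^ j * (ν.val.map a).prod
        = ∑ i : Fin m, ∑ μ : Sym (Fin m) k,
            (Multiset.count i μ.val : R) * (μ.val.map a).prod :=
          Finset.sum_congr rfl fun i _ => key_count a i
      _ = ∑ μ : Sym (Fin m) k,
            (∑ i : Fin m, (Multiset.count i μ.val : R)) * (μ.val.map a).prod := by
          rw [Finset.sum_comm]; simp [Finset.sum_mul]
      _ = ∑ μ : Sym (Fin m) k, (k : R) * (μ.val.map a).prod := by
          refine Finset.sum_congr rfl fun μ _ => ?_
          rw [← Nat.cast_sum]
          congr 2
          rw [Multiset.sum_count_eq_card (fun _ _ => Finset.mem_univ _), μ.prop]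
  simp_rw [hp, hh, Finset.sum_mul, Finset.mul_sum]
  exact key.symm
end
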